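/- arXiv:1403.7653 — 4 statements merged into one kernel-verified Lean document; each statement's English description precedes it below -/
import Mathlib

section
/- Let A be a unital C*-algebra with no tracial state. Then there exist finitely many elements a₁,…,aₙ ∈ A such that Σ aᵢ*aᵢ = 1 and ‖Σ aᵢaᵢ*‖ < 1. -/
open scoped ComplexOrder

/-- A tracial state on a unital C*-algebra: a positive unital linear functional `φ`
with `φ (x * y) = φ (y * x)`. -/
def IsTracialState {A : Type*} [CStarAlgebra A] (φ : A →ₗ[ℂ] ℂ) : Prop :=
  (∀ x : A, 0 ≤ φ (star x * x)) ∧ φ 1 = 1 ∧ ∀ x y : A, φ (x * y) = φ (y * x)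

/-!
If every sum `∑ aᵢ aᵢ*` with `∑ aᵢ* aᵢ = 1` had norm at least `1`, the convex set of these sums
would miss the open unit ball, and Hahn–Banach would give a real functional `g` of norm at most
`1` with `g ≥ 1` on that set. Then `g 1 = 1`, so `g` is positive; and since `b b* + (1 - b* b)`
belongs to the set whenever `‖b‖ ≤ 1`, `g (b* b) ≤ g (b b*)`, hence equality by symmetry.
Complexifying `g` on self-adjoint parts yields a tracial state.
-/

theorem exists_strongDual_le_norm_and_one_le_of_convex {E : Type*} [NormedAddCommGroup E]
    [NormedSpace ℝ E] {s : Set E} (hs : Convex ℝ s) (hs₁ : ∀ x ∈ s, 1 ≤ ‖x‖) :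
    ∃ g : StrongDual ℝ E, (∀ x, g x ≤ ‖x‖) ∧ ∀ x ∈ s, 1 ≤ g x := by
  have hdisj : Disjoint (Metric.ball (0 : E) 1) s :=
    Set.disjoint_left.2 fun x hx hxs => (mem_ball_zero_iff.1 hx).not_ge (hs₁ x hxs)
  obtain ⟨f, u, hball, hsu⟩ :=
    geometric_hahn_banach_open (convex_ball 0 1) Metric.isOpen_ball hs hdisj
  have hu : 0 < u := by simpa using hball 0 (Metric.mem_ball_self one_pos)
  refine ⟨u⁻¹ • f, fun x => le_of_forall_gt_imp_ge_of_dense fun t ht => ?_, fun x hx => ?_⟩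
  · have ht₀ : 0 < t := (norm_nonneg x).trans_lt ht
    have hx : t⁻¹ • x ∈ Metric.ball (0 : E) 1 := by
      rw [mem_ball_zero_iff, norm_smul, Real.norm_of_nonneg (inv_nonneg.2 ht₀.le),
        inv_mul_lt_one₀ ht₀]
      exact ht
    have := hball _ hx
    rw [map_smul, smul_eq_mul, inv_mul_lt_iff₀ ht₀] at this
    rw [smul_apply, smul_eq_mul, inv_mul_le_iff₀ hu, mul_comm]
    exact this.le
  · rw [smul_apply, smul_eq_mul, le_inv_mul_iff₀ hu, mul_one]
    exact hsu x hx

theorem map_mul_comm_of_map_mul_star_eq {A : Type*} [Ring A] [StarRing A] [Algebra ℂ A]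
    [StarModule ℂ A] (φ : A →ₗ[ℂ] ℂ) (hφ : ∀ z, φ (z * star z) = φ (star z * z)) (x y : A) :
    φ (x * y) = φ (y * x) := by
  have h₁ := hφ x
  have h₂ := hφ (star y)
  have e₁ := hφ (x + star y)
  have e₂ := hφ (x + Complex.I • star y)
  simp only [star_add, star_smul, star_star, RCLike.star_def, Complex.conj_I, add_mul, mul_add,
    smul_mul_assoc, mul_smul_comm, neg_mul, mul_neg, neg_smul, map_add, map_neg, map_smul,
    smul_eq_mul] at h₂ e₁ e₂
  linear_combination (norm := ring_nf)
    (e₁ - h₁ - h₂) / 2 + Complex.I * (e₂ - h₁ + Complex.I * Complex.I * h₂) / 2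
  simp only [Complex.I_sq]
  ring

noncomputable def hermitianExtension {A : Type*} [AddCommGroup A] [Module ℂ A]
    [StarAddMonoid A] [StarModule ℂ A] (g : A →ₗ[ℝ] ℝ) : A →ₗ[ℂ] ℂ :=
  Module.Dual.extendRCLike (g ∘ₗ (selfAdjoint.submodule ℝ A).subtype ∘ₗ realPart)

open ComplexStarModule in
theorem hermitianExtension_apply_of_isSelfAdjoint {A : Type*} [AddCommGroup A] [Module ℂ A]
    [StarAddMonoid A] [StarModule ℂ A] (g : A →ₗ[ℝ] ℝ) {s : A} (hs : IsSelfAdjoint s) :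
    hermitianExtension g s = g s := by
  change (g (ℜ s : A) : ℂ) - Complex.I * g (ℜ (Complex.I • s) : A) = g s
  simp [hs.coe_realPart, hs.imaginaryPart]

theorem isTracialState_hermitianExtension {A : Type*} [CStarAlgebra A] (g : A →ₗ[ℝ] ℝ)
    (hpos : ∀ x : A, 0 ≤ g (star x * x)) (hone : g 1 = 1)
    (htr : ∀ x : A, g (x * star x) = g (star x * x)) : IsTracialState (hermitianExtension g) := by
  have hsa (x : A) : IsSelfAdjoint (star x * x) := .star_mul_self x
  have hsa' (x : A) : IsSelfAdjoint (x * star x) := .mul_star_self x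
  refine ⟨fun x => ?_, ?_, map_mul_comm_of_map_mul_star_eq _ fun z => ?_⟩
  · rw [hermitianExtension_apply_of_isSelfAdjoint g (hsa x)]
    exact_mod_cast hpos x
  · rw [hermitianExtension_apply_of_isSelfAdjoint g (.one A), hone, Complex.ofReal_one]
  · rw [hermitianExtension_apply_of_isSelfAdjoint g (hsa z),
      hermitianExtension_apply_of_isSelfAdjoint g (hsa' z), htr]

def swappedSums (A : Type*) [CStarAlgebra A] : Set A :=
  {x | ∃ n, ∃ a : Fin n → A, ∑ i, star (a i) * a i = 1 ∧ ∑ i, a i * star (a i) = x}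

namespace swappedSums

variable {A : Type*} [CStarAlgebra A]

theorem one_mem : (1 : A) ∈ swappedSums A :=
  ⟨1, fun _ => 1, by simp, by simp⟩

theorem convex : Convex ℝ (swappedSums A) := by
  rintro x ⟨n, a, ha, rfl⟩ y ⟨m, b, hb, rfl⟩ s t hs ht hst
  refine ⟨n + m, Fin.append (fun i => √s • a i) (fun j => √t • b j), ?_, ?_⟩ <;>
    simp only [Fin.sum_univ_add, Fin.append_left, Fin.append_right, star_smul, star_trivial,
      smul_mul_smul_comm, Real.mul_self_sqrt hs, Real.mul_self_sqrt ht, ← Finset.smul_sum]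
  rw [ha, hb, ← add_smul, hst, one_smul]

theorem mul_star_add_one_sub_star_mul_mem [PartialOrder A] [StarOrderedRing A] {b : A}
    (hb : ‖b‖ ≤ 1) : b * star b + (1 - star b * b) ∈ swappedSums A := by
  have hbb : 0 ≤ 1 - star b * b := by
    rw [sub_nonneg, ← map_one (algebraMap ℝ A),
      ← CStarAlgebra.norm_le_iff_le_algebraMap _ zero_le_one, CStarRing.norm_star_mul_self]
    exact mul_le_one₀ hb (norm_nonneg b) hb
  set s := CFC.sqrt (1 - star b * b)
  have hs : star s = s := (CFC.sqrt_nonneg _).isSelfAdjoint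
  have hss : s * s = 1 - star b * b := CFC.sqrt_mul_sqrt_self _ hbb
  refine ⟨2, ![b, s], ?_, ?_⟩ <;> simp [Fin.sum_univ_two, hs, hss]

end swappedSums

section TracialStateOfSeparatingFunctional

variable {A : Type*} [CStarAlgebra A] {g : A →ₗ[ℝ] ℝ}

theorem map_nonneg_of_le_norm [PartialOrder A] [StarOrderedRing A] (hle : ∀ x, g x ≤ ‖x‖)
    (hone : g 1 = 1) {p : A} (hp : 0 ≤ p) : 0 ≤ g p := by
  have hq : ‖algebraMap ℝ A ‖p‖ - p‖ ≤ ‖p‖ := by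
    rw [CStarAlgebra.norm_le_iff_le_algebraMap _ (norm_nonneg p)
      (sub_nonneg.2 (IsSelfAdjoint.of_nonneg hp).le_algebraMap_norm_self)]
    exact sub_le_self _ hp
  have := (hle _).trans hq
  rw [map_sub, Algebra.algebraMap_eq_smul_one, map_smul, hone, smul_eq_mul, mul_one] at this
  linarith

theorem map_star_mul_self_le [PartialOrder A] [StarOrderedRing A] (hone : g 1 = 1)
    (hsums : ∀ x ∈ swappedSums A, 1 ≤ g x) (b : A) : g (star b * b) ≤ g (b * star b) := by
  have hunit {c : A} (hc : ‖c‖ ≤ 1) : g (star c * c) ≤ g (c * star c) := by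
    have := hsums _ (swappedSums.mul_star_add_one_sub_star_mul_mem hc)
    rw [map_add, map_sub, hone] at this
    linarith
  obtain ⟨r, c, hc, rfl⟩ : ∃ (r : ℝ) (c : A), ‖c‖ ≤ 1 ∧ b = r • c := by
    have hr : 0 < ‖b‖ + 1 := by positivity
    refine ⟨‖b‖ + 1, (‖b‖ + 1)⁻¹ • b, ?_, (smul_inv_smul₀ hr.ne' b).symm⟩
    rw [norm_smul, Real.norm_of_nonneg (inv_nonneg.2 hr.le), inv_mul_le_one₀ hr]
    linarith
  simp only [star_smul, star_trivial, smul_mul_smul_comm, map_smul, smul_eq_mul]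
  exact mul_le_mul_of_nonneg_left (hunit hc) (mul_self_nonneg r)

theorem exists_isTracialState_of_le_norm (hle : ∀ x, g x ≤ ‖x‖)
    (hsums : ∀ x ∈ swappedSums A, 1 ≤ g x) : ∃ φ : A →ₗ[ℂ] ℂ, IsTracialState φ := by
  let : PartialOrder A := CStarAlgebra.spectralOrder A
  let : StarOrderedRing A := CStarAlgebra.spectralOrderedRing A
  have hone_le : 1 ≤ g 1 := hsums 1 swappedSums.one_mem
  have : Nontrivial A := ⟨1, 0, fun h => by rw [h, map_zero] at hone_le; linarith⟩
  have hone : g 1 = 1 := le_antisymm ((hle 1).trans CStarRing.norm_one.le) hone_le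
  refine ⟨hermitianExtension g, isTracialState_hermitianExtension g
    (fun x => map_nonneg_of_le_norm hle hone (star_mul_self_nonneg x)) hone fun x => ?_⟩
  have := map_star_mul_self_le hone hsums (star x)
  rw [star_star] at this
  exact le_antisymm this (map_star_mul_self_le hone hsums x)

end TracialStateOfSeparatingFunctional

/-- If a unital C*-algebra has no tracial state, then there are finitely many elements
`a₁, …, aₙ` with `∑ aᵢ* aᵢ = 1` and `‖∑ aᵢ aᵢ*‖ < 1`. -/
theorem stmt1 {A : Type*} [CStarAlgebra A]
    (h : ¬ ∃ φ : A →ₗ[ℂ] ℂ, IsTracialState φ) :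
    ∃ (n : ℕ) (a : Fin n → A),
      ∑ i, star (a i) * a i = 1 ∧ ‖∑ i, a i * star (a i)‖ < 1 := by
  by_contra! hsmall
  obtain ⟨g, hle, hsums⟩ := exists_strongDual_le_norm_and_one_le_of_convex
    (swappedSums.convex (A := A)) (by rintro _ ⟨n, a, ha, rfl⟩; exact hsmall n a ha)
  exact h (exists_isTracialState_of_le_norm (g := g.toLinearMap) hle hsums)
end

section
/- Let A be a unital C*-algebra, b₁,…,bₙ ∈ A with ‖Σ bᵢ*bᵢ − 2·1‖ < 1/3 and ‖Σ bᵢbᵢ* − 1‖ < 1/3. Define aᵢ = bᵢ·(Σⱼ bⱼ*bⱼ)^{-1/2}. Then Σ aᵢ*aᵢ = 1 and ‖Σ aᵢaᵢ*‖ ≤ 4/5 < 1. -/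
/-!
Put `S = ∑ bᵢ* bᵢ`. Since `S - 2` is self-adjoint of norm `< 1/3`, `S ≥ 5/3`, so `S` is strictly
positive and `‖S⁻¹‖ ≤ 3/5`. Then `∑ aᵢ* aᵢ = S^{-1/2} S S^{-1/2} = 1`, while
`∑ aᵢ aᵢ* = ∑ bᵢ S⁻¹ bᵢ* ≤ ‖S⁻¹‖ ∑ bᵢ bᵢ*`, whose norm is at most `3/5 · 4/3 = 4/5`.
-/

open CFC

section

variable {A : Type*} [CStarAlgebra A] [PartialOrder A] [StarOrderedRing A]

lemma IsSelfAdjoint.algebraMap_sub_le_of_norm_sub_le {a : A} (ha : IsSelfAdjoint a) {r ε : ℝ}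
    (h : ‖a - algebraMap ℝ A r‖ ≤ ε) : algebraMap ℝ A (r - ε) ≤ a := by
  have hneg := (ha.sub (.algebraMap A (.all r))).neg_algebraMap_norm_le_self
  calc algebraMap ℝ A (r - ε) ≤ algebraMap ℝ A (r - ‖a - algebraMap ℝ A r‖) :=
        algebraMap_mono A (by linarith)
    _ ≤ a := by rw [map_sub]; exact sub_le_comm.mp (by simpa [sub_eq_add_neg, add_comm] using hneg)

lemma norm_ringInverse_le_inv {a : A} {c : ℝ} (hc : 0 < c) (h : algebraMap ℝ A c ≤ a) :
    ‖Ring.inverse a‖ ≤ c⁻¹ := by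
  have hc' : IsStrictlyPositive (algebraMap ℝ A c) := isStrictlyPositive_algebraMap hc
  have ha : IsStrictlyPositive a := hc'.of_le h
  rw [CStarAlgebra.norm_le_iff_le_algebraMap _ (inv_nonneg.mpr hc.le) ha.ringInverse.nonneg]
  calc Ring.inverse a ≤ Ring.inverse (algebraMap ℝ A c) :=
        CStarAlgebra.ringInverse_le_ringInverse h
    _ = algebraMap ℝ A c⁻¹ := by
      simpa using (Ring.inverse_mul_eq_iff_eq_mul _ 1 _ hc'.isUnit).mpr
        (by rw [← map_mul, mul_inv_cancel₀ hc.ne', map_one])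

lemma CFC.sqrt_ringInverse_eq_rpow {a : A} (ha : IsStrictlyPositive a) :
    sqrt (Ring.inverse a) = a ^ (-(1 / 2) : ℝ) := by
  rw [inverse_eq_rpow_neg_one, sqrt_eq_rpow, rpow_rpow _ _ _ (by norm_num)]
  norm_num

lemma norm_sum_conjugate_le {ι : Type*} (s : Finset ι) (b : ι → A) {r : A} (hr : 0 ≤ r) :
    ‖∑ i ∈ s, b i * r * star (b i)‖ ≤ ‖r‖ * ‖∑ i ∈ s, b i * star (b i)‖ := by
  have hle : ∑ i ∈ s, b i * r * star (b i) ≤ ‖r‖ • ∑ i ∈ s, b i * star (b i) := by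
    rw [Finset.smul_sum]
    exact Finset.sum_le_sum fun i _ => CStarAlgebra.star_right_conjugate_le_norm_smul
  have hnonneg : 0 ≤ ∑ i ∈ s, b i * r * star (b i) :=
    Finset.sum_nonneg fun i _ => star_right_conjugate_nonneg hr (b i)
  simpa [norm_smul] using CStarAlgebra.norm_le_norm_of_nonneg_of_le hnonneg hle

end

/-- Given `b₁, …, bₙ` with `‖∑ bᵢ* bᵢ − 2‖ < 1/3` and `‖∑ bᵢ bᵢ* − 1‖ < 1/3`, the elements
`aᵢ = bᵢ (∑ⱼ bⱼ* bⱼ)^{-1/2}` satisfy `∑ aᵢ* aᵢ = 1` and `‖∑ aᵢ aᵢ*‖ ≤ 4/5 < 1`. -/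
theorem stmt2 {A : Type*} [CStarAlgebra A] [PartialOrder A] [StarOrderedRing A]
    (n : ℕ) (b : Fin n → A)
    (h1 : ‖(∑ i, star (b i) * b i) - 2‖ < 1 / 3)
    (h2 : ‖(∑ i, b i * star (b i)) - 1‖ < 1 / 3)
    (a : Fin n → A)
    (ha : ∀ i, a i = b i * CFC.sqrt (Ring.inverse (∑ j, star (b j) * b j))) :
    ∑ i, star (a i) * a i = 1 ∧
      ‖∑ i, a i * star (a i)‖ ≤ 4 / 5 ∧ (4 : ℝ) / 5 < 1 := by
  set S := ∑ j, star (b j) * b j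
  have hS : algebraMap ℝ A (5 / 3) ≤ S := by
    have hSsa : IsSelfAdjoint S :=
      .of_nonneg (Finset.sum_nonneg fun j _ => star_mul_self_nonneg (b j))
    have := hSsa.algebraMap_sub_le_of_norm_sub_le (r := 2) (ε := 1 / 3)
      (by rw [map_ofNat]; exact h1.le)
    norm_num at this
    exact this
  have hSpos : IsStrictlyPositive S := (isStrictlyPositive_algebraMap (by norm_num)).of_le hS
  set T := sqrt (Ring.inverse S)
  have hTsa : IsSelfAdjoint T := .of_nonneg (CFC.sqrt_nonneg _)
  refine ⟨?_, ?_, by norm_num⟩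
  · calc ∑ i, star (a i) * a i = ∑ i, T * (star (b i) * b i) * T := by
          simp only [ha, star_mul, hTsa.star_eq, mul_assoc]
      _ = S ^ (-(1 / 2) : ℝ) * S * S ^ (-(1 / 2) : ℝ) := by
          rw [← Finset.sum_mul, ← Finset.mul_sum, show T = _ from sqrt_ringInverse_eq_rpow hSpos]
      _ = 1 := conjugate_rpow_neg_one_half S
  · calc ‖∑ i, a i * star (a i)‖ = ‖∑ i, b i * Ring.inverse S * star (b i)‖ := by
          refine congrArg norm (Finset.sum_congr rfl fun i _ => ?_)
          rw [ha, star_mul, hTsa.star_eq, mul_assoc, ← mul_assoc T,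
            sqrt_mul_sqrt_self _ hSpos.ringInverse.nonneg, ← mul_assoc]
      _ ≤ ‖Ring.inverse S‖ * ‖∑ i, b i * star (b i)‖ :=
          norm_sum_conjugate_le _ _ hSpos.ringInverse.nonneg
      _ ≤ (5 / 3)⁻¹ * (1 + 1 / 3) := by
          gcongr
          · exact norm_ringInverse_le_inv (by norm_num) hS
          · rcases subsingleton_or_nontrivial A with _ | _
            · rw [norm_of_subsingleton]; norm_num
            exact (norm_le_norm_add_norm_sub' _ 1).trans (by rw [norm_one]; linarith)
      _ = 4 / 5 := by norm_num
end

section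
/- Let B be a unital C*-algebra, v, w ∈ B with v*v = 1 and ‖w‖ < 1, and suppose v is not invertible. Then y = v + w satisfies: y*y is invertible, y is not invertible, and the element u = y(y*y)^{-1/2} is an isometry with uu* ≠ 1. -/
/-!
Write `y = v + w = (1 + w v*) v`. Since `‖w v*‖ ≤ ‖w‖ < 1`, the factor `1 + w v*` is invertible
(Neumann series), so `y` is invertible iff `v` is, and `v* (1 + w v*)⁻¹` is a left inverse of `y`.
A left-invertible `y` (say `b y = 1`) has `1 = y* b* b y ≤ ‖b‖² y* y`, so `y* y` is bounded below
by a positive scalar and is invertible. Then `u = y (y* y)^{-1/2}` satisfies `u* u = 1`, and `u` is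
invertible iff `y` is; hence `u u* ≠ 1`.
-/

section

variable {A : Type*} [CStarAlgebra A]

lemma norm_le_one_of_star_mul_self_eq_one {v : A} (hv : star v * v = 1) : ‖v‖ ≤ 1 := by
  nontriviality A
  have : ‖v‖ * ‖v‖ = 1 := by rw [← CStarRing.norm_star_mul_self, hv, norm_one]
  nlinarith [norm_nonneg v]

lemma isUnit_one_add_mul_star_of_norm_lt_one {v w : A} (hv : star v * v = 1) (hw : ‖w‖ < 1) :
    IsUnit (1 + w * star v) := by
  have : ‖-(w * star v)‖ < 1 :=
    calc ‖-(w * star v)‖ ≤ ‖w‖ * ‖star v‖ := (norm_neg _).trans_le (norm_mul_le _ _)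
      _ ≤ ‖w‖ := mul_le_of_le_one_right (norm_nonneg w)
        (norm_star v ▸ norm_le_one_of_star_mul_self_eq_one hv)
      _ < 1 := hw
  simpa using isUnit_one_sub_of_norm_lt_one this

variable [PartialOrder A] [StarOrderedRing A]

lemma isUnit_star_mul_self_of_mul_eq_one {a b : A} (h : b * a = 1) : IsUnit (star a * a) := by
  nontriviality A
  have hb : ‖b‖ ≠ 0 := norm_ne_zero_iff.mpr (by rintro rfl; simp at h)
  have key : (1 : A) ≤ ‖b‖ ^ 2 • (star a * a) :=
    calc (1 : A) = star (b * a) * (b * a) := by rw [h, star_one, one_mul]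
      _ = star a * (star b * b) * a := by simp only [star_mul, mul_assoc]
      _ ≤ star a * algebraMap ℝ A (‖b‖ ^ 2) * a :=
          star_left_conjugate_le_conjugate CStarAlgebra.star_mul_le_algebraMap_norm_sq a
      _ = ‖b‖ ^ 2 • (star a * a) := by
          rw [Algebra.algebraMap_eq_smul_one, mul_smul_one, smul_mul_assoc]
  have key' : algebraMap ℝ A (‖b‖ ^ 2)⁻¹ ≤ star a * a := by
    have := smul_le_smul_of_nonneg_left key (inv_nonneg.mpr (sq_nonneg ‖b‖))
    rwa [smul_smul, inv_mul_cancel₀ (pow_ne_zero 2 hb), one_smul,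
      ← Algebra.algebraMap_eq_smul_one] at this
  exact CStarAlgebra.isUnit_of_le _ key' (isStrictlyPositive_algebraMap (by positivity))

lemma CFC.sqrt_inverse_eq_rpow_neg_half {x : A} (hx : IsStrictlyPositive x) :
    CFC.sqrt (Ring.inverse x) = x ^ (-(1 / 2) : ℝ) := by
  lift x to Aˣ using hx.isUnit
  rw [Ring.inverse_unit, ← CFC.rpow_neg_one_eq_inv x hx.nonneg,
    CFC.sqrt_rpow x.isUnit (by norm_num)]
  norm_num

noncomputable def polarIsometry (a : A) : A := a * CFC.sqrt (Ring.inverse (star a * a))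

variable {a : A}

lemma polarIsometry_eq_mul_rpow (ha : IsUnit (star a * a)) :
    polarIsometry a = a * (star a * a) ^ (-(1 / 2) : ℝ) := by
  rw [polarIsometry,
    CFC.sqrt_inverse_eq_rpow_neg_half (ha.isStrictlyPositive (star_mul_self_nonneg a))]

lemma star_polarIsometry_mul_self (ha : IsUnit (star a * a)) :
    star (polarIsometry a) * polarIsometry a = 1 := by
  have hs : IsSelfAdjoint ((star a * a) ^ (-(1 / 2) : ℝ)) := .of_nonneg CFC.rpow_nonneg
  rw [polarIsometry_eq_mul_rpow ha, star_mul, hs.star_eq]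
  calc _ = (star a * a) ^ (-(1 / 2) : ℝ) * (star a * a) * (star a * a) ^ (-(1 / 2) : ℝ) := by
        simp only [mul_assoc]
    _ = 1 := CFC.conjugate_rpow_neg_one_half _ (ha.isStrictlyPositive (star_mul_self_nonneg a))

lemma isUnit_polarIsometry_iff (ha : IsUnit (star a * a)) :
    IsUnit (polarIsometry a) ↔ IsUnit a := by
  have hs : IsUnit ((star a * a) ^ (-(1 / 2) : ℝ)) :=
    (CFC.isUnit_rpow_iff _ _ (by norm_num) (star_mul_self_nonneg a)).mpr ha
  rw [polarIsometry_eq_mul_rpow ha, ← hs.unit_spec, Units.isUnit_mul_units]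

end

/-- If `v` is a non-invertible isometry and `‖w‖ < 1`, then `y = v + w` has `y* y`
invertible, `y` is not invertible, and `u = y (y* y)^{-1/2}` is an isometry with
`u u* ≠ 1` (a non-unitary isometry). -/
theorem stmt3 {B : Type*} [CStarAlgebra B] [PartialOrder B] [StarOrderedRing B]
    (v w : B) (hv : star v * v = 1) (hvni : ¬ IsUnit v) (hw : ‖w‖ < 1)
    (y u : B) (hy : y = v + w)
    (hu : u = y * CFC.sqrt (Ring.inverse (star y * y))) :
    IsUnit (star y * y) ∧ ¬ IsUnit y ∧ star u * u = 1 ∧ u * star u ≠ 1 := by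
  obtain ⟨c, hc⟩ := isUnit_one_add_mul_star_of_norm_lt_one hv hw
  have hyc : y = c * v := by rw [hy, hc, add_mul, one_mul, mul_assoc, hv, mul_one]
  have hleft : star v * ↑c⁻¹ * y = 1 := by rw [hyc, mul_assoc, Units.inv_mul_cancel_left, hv]
  have hyy : IsUnit (star y * y) := isUnit_star_mul_self_of_mul_eq_one hleft
  have hyni : ¬ IsUnit y := by rwa [hyc, Units.isUnit_units_mul]
  have hu' : u = polarIsometry y := hu
  have huu : star u * u = 1 := hu' ▸ star_polarIsometry_mul_self hyy
  refine ⟨hyy, hyni, huu, fun h ↦ hyni ?_⟩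
  rw [← isUnit_polarIsometry_iff hyy, ← hu']
  exact ⟨⟨u, star u, h, huu⟩, rfl⟩
end

section
/- Let A be a simple unital C*-algebra, B a unital C*-algebra, and π : A → C, ρ : B → C unital *-homomorphisms into a C*-algebra C with commuting ranges, with π injective and ρ injective. Suppose B is simple. Then the map Σ xᵢ ⊗ zᵢ ↦ Σ π(xᵢ)ρ(zᵢ) defines a C*-seminorm β on the algebraic tensor product A ⊙ B such that β(x ⊗ z) = 0 implies x = 0 or z = 0. -/
open scoped TensorProduct CStarAlgebra

/-- A unital C*-algebra is (C*-)simple if it has no nontrivial closed two-sided ideals. -/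
def IsCStarSimple (A : Type*) [CStarAlgebra A] : Prop :=
  ∀ I : Ideal A, (∀ a ∈ I, ∀ r : A, a * r ∈ I) → IsClosed (I : Set A) →
    I = ⊥ ∨ I = ⊤

namespace Ideal

variable {B C : Type*} [Semiring B] [Semiring C]

def comapAnnihilator (ρ : B →+* C) (c : C) (hc : ∀ b, Commute c (ρ b)) : Ideal B where
  carrier := {w | c * ρ w = 0}
  add_mem' {a b} (ha : c * ρ a = 0) (hb : c * ρ b = 0) := by
    change c * ρ (a + b) = 0
    rw [map_add, mul_add, ha, hb, add_zero]
  zero_mem' := by simp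
  smul_mem' r w (hw : c * ρ w = 0) := by
    change c * ρ (r * w) = 0
    rw [map_mul, ← mul_assoc, (hc r).eq, mul_assoc, hw, mul_zero]

variable {ρ : B →+* C} {c : C} {hc : ∀ b, Commute c (ρ b)}

@[simp]
theorem mem_comapAnnihilator {w : B} : w ∈ comapAnnihilator ρ c hc ↔ c * ρ w = 0 :=
  Iff.rfl

theorem comapAnnihilator_mul_mem_right {a : B} (ha : a ∈ comapAnnihilator ρ c hc) (r : B) :
    a * r ∈ comapAnnihilator ρ c hc := by
  rw [mem_comapAnnihilator] at ha ⊢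
  rw [map_mul, ← mul_assoc, ha, zero_mul]

theorem isClosed_comapAnnihilator [TopologicalSpace B] [TopologicalSpace C] [T1Space C]
    [ContinuousMul C] (hρ : Continuous ρ) : IsClosed (comapAnnihilator ρ c hc : Set B) :=
  isClosed_singleton.preimage (continuous_const.mul hρ)

end Ideal

theorem IsCStarSimple.eq_zero_or_eq_zero_of_mul_map_eq_zero {B C : Type*} [CStarAlgebra B]
    [CStarAlgebra C] (hB : IsCStarSimple B) (ρ : B →⋆ₐ[ℂ] C) {c : C}
    (hc : ∀ b, Commute c (ρ b)) {z : B} (hz : c * ρ z = 0) : c = 0 ∨ z = 0 := by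
  set I := Ideal.comapAnnihilator (ρ : B →+* C) c hc
  have hzI : z ∈ I := hz
  rcases hB I (fun _ ha r => Ideal.comapAnnihilator_mul_mem_right ha r)
      (Ideal.isClosed_comapAnnihilator (map_continuous ρ)) with hI | hI
  · exact .inr (by simpa [hI] using hzI)
  · have h1 : c * ρ 1 = 0 := Ideal.mem_comapAnnihilator.mp (hI ▸ Submodule.mem_top)
    exact .inl (by simpa using h1)

theorem stmt19_general {A B C : Type*} [CStarAlgebra A] [CStarAlgebra B] [CStarAlgebra C]
    (hB : IsCStarSimple B)
    (π : A →⋆ₐ[ℂ] C) (ρ : B →⋆ₐ[ℂ] C)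
    (hcomm : ∀ (a : A) (b : B), Commute (π a) (ρ b))
    (hπ : Function.Injective π)
    (β : (A ⊗[ℂ] B) → ℝ)
    (hβ : ∀ t : A ⊗[ℂ] B,
      β t = ‖Algebra.TensorProduct.lift π.toAlgHom ρ.toAlgHom hcomm t‖) :
    (∀ t : A ⊗[ℂ] B, 0 ≤ β t) ∧
    (∀ s t : A ⊗[ℂ] B, β (s + t) ≤ β s + β t) ∧
    (∀ (c : ℂ) (t : A ⊗[ℂ] B), β (c • t) = ‖c‖ * β t) ∧
    (∀ s t : A ⊗[ℂ] B, β (s * t) ≤ β s * β t) ∧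
    (∀ (x : A) (z : B), β (x ⊗ₜ[ℂ] z) = 0 → x = 0 ∨ z = 0) := by
  refine ⟨fun t => by rw [hβ]; positivity,
    fun s t => by simpa only [hβ, map_add] using norm_add_le _ _,
    fun c t => by simp only [hβ, map_smul, norm_smul],
    fun s t => by simpa only [hβ, map_mul] using norm_mul_le _ _, fun x z hxz => ?_⟩
  have hxz' : π x * ρ z = 0 := by simpa [hβ] using hxz
  exact (hB.eq_zero_or_eq_zero_of_mul_map_eq_zero ρ (hcomm x) hxz').imp_left
    fun hx => hπ (by rw [hx, map_zero])

/-- Given simple unital C*-algebras `A`, `B` and injective unital *-homomorphisms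
`π : A → C`, `ρ : B → C` with commuting ranges, the map
`∑ xᵢ ⊗ zᵢ ↦ ‖∑ π(xᵢ)ρ(zᵢ)‖` is a C*-seminorm `β` on the algebraic tensor product
`A ⊙ B` with `β(x ⊗ z) = 0 → x = 0 ∨ z = 0`. -/
theorem stmt19 {A B C : Type*} [CStarAlgebra A] [CStarAlgebra B] [CStarAlgebra C]
    (hA : IsCStarSimple A) (hB : IsCStarSimple B)
    (π : A →⋆ₐ[ℂ] C) (ρ : B →⋆ₐ[ℂ] C)
    (hcomm : ∀ (a : A) (b : B), Commute (π a) (ρ b))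
    (hπ : Function.Injective π) (hρ : Function.Injective ρ)
    (β : (A ⊗[ℂ] B) → ℝ)
    (hβ : ∀ t : A ⊗[ℂ] B,
      β t = ‖Algebra.TensorProduct.lift π.toAlgHom ρ.toAlgHom hcomm t‖) :
    (∀ t : A ⊗[ℂ] B, 0 ≤ β t) ∧
    (∀ s t : A ⊗[ℂ] B, β (s + t) ≤ β s + β t) ∧
    (∀ (c : ℂ) (t : A ⊗[ℂ] B), β (c • t) = ‖c‖ * β t) ∧
    (∀ s t : A ⊗[ℂ] B, β (s * t) ≤ β s * β t) ∧
    (∀ (x : A) (z : B), β (x ⊗ₜ[ℂ] z) = 0 → x = 0 ∨ z = 0) :=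
  stmt19_general hB π ρ hcomm hπ β hβ
end
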